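/- Assume R₁ > 1, R₁ > R₂ and R₁ > R₃. Then there exists a unique point x = (y₁, y₂, y₃, v₁, v₂, v₃) ∈ ℝ⁶ with all six coordinates positive satisfying F(x) = 0. Its first coordinate is ŷ₁ = (1 − 1/R₁) / (1 + (p₂/q₂)·R₂/(R₁−R₂) + (p₂q₃/(q₂r₃))·R₂R₃/((R₁−R₂)(R₁−R₃))), and the remaining coordinates are ŷ₂ = (p₂/q₂)·(R₂/(R₁−R₂))·ŷ₁, ŷ₃ = (p₂q₃/(q₂r₃))·(R₂R₃/((R₁−R₂)(R₁−R₃)))·ŷ₁, v̂₁ = (p₁/c)·ŷ₁, v̂₂ = (p₂ŷ₁ + q₂ŷ₂)/c, v̂₃ = (q₃ŷ₂ + r₃ŷ₃)/c. -/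

import Mathlib

/-!
Eliminating `v` through the three production equations `c vᵢ = …`, the first infection equation
becomes `δ₁ y₁ (R₁ β − 1) = 0`, so `y₁ ≠ 0` forces `β = 1 / R₁`. With `β` known, the two mutant
infection equations are linear: `y₂ = A y₁` and `y₃ = B y₂` with
`A = (p₂/q₂) R₂/(R₁ − R₂)` and `B = (q₃/r₃) R₃/(R₁ − R₃)`, and then `1 − y₁ − y₂ − y₃ = 1 / R₁`
determines `y₁ = (1 − 1/R₁) / (1 + A + A B)`. The hypotheses `R₁ > R₂`, `R₁ > R₃` make `A`, `B`
positive, and `R₁ > 1` makes `y₁` positive.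
-/

/-- The HBV three-strain vector field `F(y₁,y₂,y₃,v₁,v₂,v₃)`, with `β = 1 − y₁ − y₂ − y₃`. -/
noncomputable def Fhbv (α₁ α₂ α₃ δ₁ δ₂ δ₃ c p₁ p₂ q₂ q₃ r₃ : ℝ) (x : Fin 6 → ℝ) :
    Fin 6 → ℝ :=
  ![α₁ * (1 - x 0 - x 1 - x 2) * x 3 - δ₁ * x 0,
    α₂ * (1 - x 0 - x 1 - x 2) * x 4 - δ₂ * x 1,
    α₃ * (1 - x 0 - x 1 - x 2) * x 5 - δ₃ * x 2,
    p₁ * x 0 - c * x 3,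
    p₂ * x 0 + q₂ * x 1 - c * x 4,
    q₃ * x 1 + r₃ * x 2 - c * x 5]

noncomputable def reproRatio (α p c δ : ℝ) : ℝ := α * p / (c * δ)

section Balance

variable {α δ c p q k β y z R₁ : ℝ}

theorem sub_mul_eq_zero_iff_eq_div {s v : ℝ} (hc : c ≠ 0) : s - c * v = 0 ↔ v = s / c := by
  rw [sub_eq_zero, eq_div_iff hc, mul_comm, eq_comm]

theorem wildtype_balance_iff (hc : c ≠ 0) (hδ : δ ≠ 0) (hy : y ≠ 0)
    (hR : reproRatio α p c δ ≠ 0) :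
    α * β * (p / c * y) - δ * y = 0 ↔ β = 1 / reproRatio α p c δ := by
  have h : α * β * (p / c * y) - δ * y = δ * y * (reproRatio α p c δ * β - 1) := by
    unfold reproRatio; field_simp
  rw [h, mul_eq_zero, or_iff_right (mul_ne_zero hδ hy), sub_eq_zero, eq_div_iff hR, mul_comm]

theorem infection_sub_clearance_eq (hc : c ≠ 0) (hδ : δ ≠ 0) (hq : q ≠ 0) :
    α * β * ((k * z + q * y) / c) - δ * y =
      δ * (reproRatio α q c δ * β * (k / q * z + y) - y) := by
  unfold reproRatio; field_simp

theorem mutant_balance_iff (hc : c ≠ 0) (hδ : δ ≠ 0) (hq : q ≠ 0) (hR₁ : R₁ ≠ 0)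
    (hR : reproRatio α q c δ ≠ R₁) (hβ : β = 1 / R₁) :
    α * β * ((k * z + q * y) / c) - δ * y = 0 ↔
      y = k / q * (reproRatio α q c δ / (R₁ - reproRatio α q c δ)) * z := by
  rw [infection_sub_clearance_eq hc hδ hq, hβ]
  set R := reproRatio α q c δ
  have hsub : R₁ - R ≠ 0 := sub_ne_zero.2 hR.symm
  have h : δ * (R * (1 / R₁) * (k / q * z + y) - y) =
      δ / R₁ * (R₁ - R) * (k / q * (R / (R₁ - R)) * z - y) := by
    field_simp; ring
  rw [h, mul_eq_zero, or_iff_right (mul_ne_zero (div_ne_zero hδ hR₁) hsub), sub_eq_zero, eq_comm]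

end Balance

theorem div_mul_div_sub_pos {a b R R₁ : ℝ} (ha : 0 < a) (hb : 0 < b) (hR : 0 < R)
    (hRR₁ : R < R₁) : 0 < a / b * (R / (R₁ - R)) :=
  mul_pos (div_pos ha hb) (div_pos hR (sub_pos.2 hRR₁))

theorem one_sub_sub_sub_eq_iff {b A B y₁ y₂ y₃ : ℝ} (hD : 1 + A + A * B ≠ 0)
    (h₂ : y₂ = A * y₁) (h₃ : y₃ = B * y₂) :
    1 - y₁ - y₂ - y₃ = b ↔ y₁ = (1 - b) / (1 + A + A * B) := by
  rw [eq_div_iff hD, h₃, h₂]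
  constructor <;> intro h <;> linear_combination -h

def ReducedSystem (R₁ A B c p₁ p₂ q₂ q₃ r₃ : ℝ) (x : Fin 6 → ℝ) : Prop :=
  x 3 = p₁ / c * x 0 ∧ x 4 = (p₂ * x 0 + q₂ * x 1) / c ∧ x 5 = (q₃ * x 1 + r₃ * x 2) / c ∧
    1 - x 0 - x 1 - x 2 = 1 / R₁ ∧ x 1 = A * x 0 ∧ x 2 = B * x 1

namespace ReducedSystem

variable {R₁ A B c p₁ p₂ q₂ q₃ r₃ : ℝ} {x x' : Fin 6 → ℝ}

theorem eq (hD : 1 + A + A * B ≠ 0) (hx : ReducedSystem R₁ A B c p₁ p₂ q₂ q₃ r₃ x)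
    (hx' : ReducedSystem R₁ A B c p₁ p₂ q₂ q₃ r₃ x') : x = x' := by
  obtain ⟨hv₁, hv₂, hv₃, hβ, hy₂, hy₃⟩ := hx
  obtain ⟨hv₁', hv₂', hv₃', hβ', hy₂', hy₃'⟩ := hx'
  have h₀ : x 0 = x' 0 := by
    rw [(one_sub_sub_sub_eq_iff hD hy₂ hy₃).1 hβ, (one_sub_sub_sub_eq_iff hD hy₂' hy₃').1 hβ']
  have h₁ : x 1 = x' 1 := by rw [hy₂, hy₂', h₀]
  have h₂ : x 2 = x' 2 := by rw [hy₃, hy₃', h₁]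
  have h₃ : x 3 = x' 3 := by rw [hv₁, hv₁', h₀]
  have h₄ : x 4 = x' 4 := by rw [hv₂, hv₂', h₀, h₁]
  have h₅ : x 5 = x' 5 := by rw [hv₃, hv₃', h₁, h₂]
  ext i
  fin_cases i <;> assumption

theorem pos (hR₁ : 1 < R₁) (hA : 0 < A) (hB : 0 < B) (hc : 0 < c) (hp₁ : 0 < p₁)
    (hp₂ : 0 < p₂) (hq₂ : 0 < q₂) (hq₃ : 0 < q₃) (hr₃ : 0 < r₃)
    (hx : ReducedSystem R₁ A B c p₁ p₂ q₂ q₃ r₃ x) : ∀ i, 0 < x i := by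
  obtain ⟨hv₁, hv₂, hv₃, hβ, hy₂, hy₃⟩ := hx
  have h₀ : 0 < x 0 := by
    rw [(one_sub_sub_sub_eq_iff (by positivity) hy₂ hy₃).1 hβ]
    exact div_pos (sub_pos.2 ((div_lt_one (zero_lt_one.trans hR₁)).2 hR₁)) (by positivity)
  have h₁ : 0 < x 1 := hy₂ ▸ mul_pos hA h₀
  have h₂ : 0 < x 2 := hy₃ ▸ mul_pos hB h₁
  have h₃ : 0 < x 3 := hv₁ ▸ by positivity
  have h₄ : 0 < x 4 := hv₂ ▸ by positivity
  have h₅ : 0 < x 5 := hv₃ ▸ by positivity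
  intro i
  fin_cases i <;> assumption

end ReducedSystem

theorem Fhbv_eq_zero_iff {α₁ α₂ α₃ δ₁ δ₂ δ₃ c p₁ p₂ q₂ q₃ r₃ : ℝ} {x : Fin 6 → ℝ}
    (hc : c ≠ 0) (hδ₁ : δ₁ ≠ 0) (hδ₂ : δ₂ ≠ 0) (hδ₃ : δ₃ ≠ 0) (hq₂ : q₂ ≠ 0) (hr₃ : r₃ ≠ 0)
    (hR₁ : reproRatio α₁ p₁ c δ₁ ≠ 0) (h12 : reproRatio α₂ q₂ c δ₂ ≠ reproRatio α₁ p₁ c δ₁)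
    (h13 : reproRatio α₃ r₃ c δ₃ ≠ reproRatio α₁ p₁ c δ₁) (hx : x 0 ≠ 0) :
    Fhbv α₁ α₂ α₃ δ₁ δ₂ δ₃ c p₁ p₂ q₂ q₃ r₃ x = 0 ↔
      ReducedSystem (reproRatio α₁ p₁ c δ₁)
        (p₂ / q₂ * (reproRatio α₂ q₂ c δ₂ / (reproRatio α₁ p₁ c δ₁ - reproRatio α₂ q₂ c δ₂)))
        (q₃ / r₃ * (reproRatio α₃ r₃ c δ₃ / (reproRatio α₁ p₁ c δ₁ - reproRatio α₃ r₃ c δ₃)))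
        c p₁ p₂ q₂ q₃ r₃ x := by
  simp only [Fhbv, ReducedSystem, funext_iff, Fin.forall_fin_succ, Fin.isValue, Pi.zero_apply,
    Matrix.cons_val_zero, Fin.succ_zero_eq_one, Matrix.cons_val_one, Fin.succ_one_eq_two,
    Matrix.cons_val, Fin.reduceSucc, IsEmpty.forall_iff, and_true]
  rw [sub_mul_eq_zero_iff_eq_div hc, sub_mul_eq_zero_iff_eq_div hc,
    sub_mul_eq_zero_iff_eq_div hc, mul_div_right_comm p₁]
  constructor
  · rintro ⟨e₁, e₂, e₃, hv₁, hv₂, hv₃⟩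
    rw [hv₁, wildtype_balance_iff hc hδ₁ hx hR₁] at e₁
    rw [hv₂, mutant_balance_iff hc hδ₂ hq₂ hR₁ h12 e₁] at e₂
    rw [hv₃, mutant_balance_iff hc hδ₃ hr₃ hR₁ h13 e₁] at e₃
    exact ⟨hv₁, hv₂, hv₃, e₁, e₂, e₃⟩
  · rintro ⟨hv₁, hv₂, hv₃, hβ, hy₂, hy₃⟩
    refine ⟨?_, ?_, ?_, hv₁, hv₂, hv₃⟩
    · rwa [hv₁, wildtype_balance_iff hc hδ₁ hx hR₁]
    · rwa [hv₂, mutant_balance_iff hc hδ₂ hq₂ hR₁ h12 hβ]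
    · rwa [hv₃, mutant_balance_iff hc hδ₃ hr₃ hR₁ h13 hβ]

theorem stmt_11_general (α₁ α₂ α₃ δ₁ δ₂ δ₃ c p₁ p₂ q₂ q₃ r₃ : ℝ)
    (hα₂ : 0 < α₂) (hα₃ : 0 < α₃)
    (hδ₁ : 0 < δ₁) (hδ₂ : 0 < δ₂) (hδ₃ : 0 < δ₃) (hc : 0 < c)
    (hp₁ : 0 < p₁) (hp₂ : 0 < p₂) (hq₂ : 0 < q₂) (hq₃ : 0 < q₃) (hr₃ : 0 < r₃)
    (hR₁ : 1 < α₁ * p₁ / (c * δ₁))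
    (h12 : α₂ * q₂ / (c * δ₂) < α₁ * p₁ / (c * δ₁))
    (h13 : α₃ * r₃ / (c * δ₃) < α₁ * p₁ / (c * δ₁)) :
    let R₁ : ℝ := α₁ * p₁ / (c * δ₁)
    let R₂ : ℝ := α₂ * q₂ / (c * δ₂)
    let R₃ : ℝ := α₃ * r₃ / (c * δ₃)
    let y₁ : ℝ := (1 - 1 / R₁) /
      (1 + (p₂ / q₂) * R₂ / (R₁ - R₂) +
        (p₂ * q₃ / (q₂ * r₃)) * (R₂ * R₃ / ((R₁ - R₂) * (R₁ - R₃))))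
    let y₂ : ℝ := (p₂ / q₂) * (R₂ / (R₁ - R₂)) * y₁
    let y₃ : ℝ := (p₂ * q₃ / (q₂ * r₃)) * (R₂ * R₃ / ((R₁ - R₂) * (R₁ - R₃))) * y₁
    let v₁ : ℝ := (p₁ / c) * y₁
    let v₂ : ℝ := (p₂ * y₁ + q₂ * y₂) / c
    let v₃ : ℝ := (q₃ * y₂ + r₃ * y₃) / c
    let x₁ : Fin 6 → ℝ := ![y₁, y₂, y₃, v₁, v₂, v₃]
    (∀ i, 0 < x₁ i) ∧
      Fhbv α₁ α₂ α₃ δ₁ δ₂ δ₃ c p₁ p₂ q₂ q₃ r₃ x₁ = 0 ∧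
      ∀ x : Fin 6 → ℝ, (∀ i, 0 < x i) →
        Fhbv α₁ α₂ α₃ δ₁ δ₂ δ₃ c p₁ p₂ q₂ q₃ r₃ x = 0 → x = x₁ := by
  intro R₁ R₂ R₃ y₁ y₂ y₃ v₁ v₂ v₃ x₁
  set A := p₂ / q₂ * (R₂ / (R₁ - R₂))
  set B := q₃ / r₃ * (R₃ / (R₁ - R₃))
  have hA : 0 < A := div_mul_div_sub_pos hp₂ hq₂ (by positivity) h12
  have hB : 0 < B := div_mul_div_sub_pos hq₃ hr₃ (by positivity) h13
  have hR : R₂ * R₃ / ((R₁ - R₂) * (R₁ - R₃)) = R₂ / (R₁ - R₂) * (R₃ / (R₁ - R₃)) :=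
    mul_div_mul_comm _ _ _ _
  have hy₂ : y₂ = A * y₁ := rfl
  have hy₃ : y₃ = B * y₂ := by simp only [y₃, y₂, B, hR]; ring
  have hx₁ : ReducedSystem R₁ A B c p₁ p₂ q₂ q₃ r₃ x₁ := by
    refine ⟨rfl, rfl, rfl, (one_sub_sub_sub_eq_iff (by positivity) hy₂ hy₃).2 ?_, hy₂, hy₃⟩
    simp only [y₁, A, B, hR]; ring
  have hx₁_pos := hx₁.pos hR₁ hA hB hc hp₁ hp₂ hq₂ hq₃ hr₃
  have hF : ∀ x : Fin 6 → ℝ, x 0 ≠ 0 →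
      (Fhbv α₁ α₂ α₃ δ₁ δ₂ δ₃ c p₁ p₂ q₂ q₃ r₃ x = 0 ↔ ReducedSystem R₁ A B c p₁ p₂ q₂ q₃ r₃ x) :=
    fun x hx ↦ Fhbv_eq_zero_iff hc.ne' hδ₁.ne' hδ₂.ne' hδ₃.ne' hq₂.ne' hr₃.ne'
      (zero_lt_one.trans hR₁).ne' h12.ne h13.ne hx
  exact ⟨hx₁_pos, (hF x₁ (hx₁_pos 0).ne').2 hx₁,
    fun x hx hFx ↦ ((hF x (hx 0).ne').1 hFx).eq (by positivity) hx₁⟩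

/-- if R₁ > 1, R₁ > R₂ and R₁ > R₃, there exists a unique
coordinatewise-positive zero of F, given by the explicit formulas. -/
theorem stmt_11 (α₁ α₂ α₃ δ₁ δ₂ δ₃ c p₁ p₂ q₂ q₃ r₃ : ℝ)
    (hα₁ : 0 < α₁) (hα₂ : 0 < α₂) (hα₃ : 0 < α₃)
    (hδ₁ : 0 < δ₁) (hδ₂ : 0 < δ₂) (hδ₃ : 0 < δ₃) (hc : 0 < c)
    (hp₁ : 0 < p₁) (hp₂ : 0 < p₂) (hq₂ : 0 < q₂) (hq₃ : 0 < q₃) (hr₃ : 0 < r₃)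
    (hR₁ : 1 < α₁ * p₁ / (c * δ₁))
    (h12 : α₂ * q₂ / (c * δ₂) < α₁ * p₁ / (c * δ₁))
    (h13 : α₃ * r₃ / (c * δ₃) < α₁ * p₁ / (c * δ₁)) :
    let R₁ : ℝ := α₁ * p₁ / (c * δ₁)
    let R₂ : ℝ := α₂ * q₂ / (c * δ₂)
    let R₃ : ℝ := α₃ * r₃ / (c * δ₃)
    let y₁ : ℝ := (1 - 1 / R₁) /
      (1 + (p₂ / q₂) * R₂ / (R₁ - R₂) +
        (p₂ * q₃ / (q₂ * r₃)) * (R₂ * R₃ / ((R₁ - R₂) * (R₁ - R₃))))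
    let y₂ : ℝ := (p₂ / q₂) * (R₂ / (R₁ - R₂)) * y₁
    let y₃ : ℝ := (p₂ * q₃ / (q₂ * r₃)) * (R₂ * R₃ / ((R₁ - R₂) * (R₁ - R₃))) * y₁
    let v₁ : ℝ := (p₁ / c) * y₁
    let v₂ : ℝ := (p₂ * y₁ + q₂ * y₂) / c
    let v₃ : ℝ := (q₃ * y₂ + r₃ * y₃) / c
    let x₁ : Fin 6 → ℝ := ![y₁, y₂, y₃, v₁, v₂, v₃]
    (∀ i, 0 < x₁ i) ∧
      Fhbv α₁ α₂ α₃ δ₁ δ₂ δ₃ c p₁ p₂ q₂ q₃ r₃ x₁ = 0 ∧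
      ∀ x : Fin 6 → ℝ, (∀ i, 0 < x i) →
        Fhbv α₁ α₂ α₃ δ₁ δ₂ δ₃ c p₁ p₂ q₂ q₃ r₃ x = 0 → x = x₁ :=
  stmt_11_general α₁ α₂ α₃ δ₁ δ₂ δ₃ c p₁ p₂ q₂ q₃ r₃ hα₂ hα₃ hδ₁ hδ₂ hδ₃ hc hp₁ hp₂ hq₂ hq₃ hr₃ hR₁
    h12 h13
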